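/- The conjugation J implements the space-time reflection: for every n ≥ 1, every a ∈ ℝ² and λ ∈ ℝ, one has Jₙ ∘ Uₙ(a,λ) ∘ Jₙ = Uₙ(−a, λ) as operators on L²(ℝⁿ, ℂ). -/

import Mathlib

/-!
Jₙ is complex conjugation followed by multiplication with the unimodular factor ∏ S₂(θⱼ − θᵢ),
which only depends on rapidity differences and is therefore invariant under the boost θ ↦ θ − λ.
Conjugating Uₙ(a,λ) by Jₙ thus keeps the boost, cancels the factor against its conjugate, and
conjugates the phase exp(i Σ m(cosh θⱼ a₀ − sinh θⱼ a₁)), which amounts to replacing a by −a.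
-/

open MeasureTheory Complex

noncomputable section

/-- The `n`-fold L² space over rapidity variables. -/
abbrev Hsp (n : ℕ) : Type := Lp ℂ 2 (volume : Measure (Fin n → ℝ))

/-- The transposition τᵢ = (i, i+1) (0-based) in the symmetric group Sₙ. -/
def tau (n i : ℕ) (h : i + 1 < n) : Equiv.Perm (Fin n) :=
  Equiv.swap ⟨i, Nat.lt_of_succ_lt h⟩ ⟨i + 1, h⟩

/-- `D` is the S₂-twisted representation of Sₙ on L²(ℝⁿ) determined on the
transpositions τᵢ by `(D(τᵢ)ψ)(θ) = S₂(θ_{i+1} − θ_i)·ψ(θ ∘ τᵢ)`. -/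
def IsZamoRep (S₂ : ℝ → ℂ) (n : ℕ)
    (D : Equiv.Perm (Fin n) →* unitary (Hsp n →L[ℂ] Hsp n)) : Prop :=
  ∀ (i : ℕ) (hi : i + 1 < n) (ψ : Hsp n),
    ∀ᵐ θ ∂(volume : Measure (Fin n → ℝ)),
      ((D (tau n i hi) : Hsp n →L[ℂ] Hsp n) ψ) θ
        = S₂ (θ ⟨i + 1, hi⟩ - θ ⟨i, Nat.lt_of_succ_lt hi⟩)
            * ψ (fun m => θ (tau n i hi m))

/-- The symmetrization Pₙ = (1/n!)·Σ_{π ∈ Sₙ} Dₙ(π). -/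
def symProj {n : ℕ}
    (D : Equiv.Perm (Fin n) →* unitary (Hsp n →L[ℂ] Hsp n)) :
    Hsp n →L[ℂ] Hsp n :=
  (n.factorial : ℂ)⁻¹ • ∑ π : Equiv.Perm (Fin n), (D π : Hsp n →L[ℂ] Hsp n)

/-- The product ∏_{1 ≤ i < j ≤ n} S₂(θⱼ − θᵢ). -/
def pairProd (S₂ : ℝ → ℂ) {n : ℕ} (θ : Fin n → ℝ) : ℂ :=
  ∏ p ∈ Finset.univ.filter (fun p : Fin n × Fin n => p.1 < p.2), S₂ (θ p.2 - θ p.1)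

lemma pairProd_sub_const (S₂ : ℝ → ℂ) {n : ℕ} (θ : Fin n → ℝ) (c : ℝ) :
    pairProd S₂ (fun j => θ j - c) = pairProd S₂ θ := by
  unfold pairProd
  exact Finset.prod_congr rfl fun p _ => by congr 1; ring

lemma norm_pairProd {S₂ : ℝ → ℂ} (hS₂abs : ∀ x : ℝ, ‖S₂ x‖ = 1) {n : ℕ} (θ : Fin n → ℝ) :
    ‖pairProd S₂ θ‖ = 1 := by
  rw [pairProd, norm_prod]
  exact Finset.prod_eq_one fun p _ => hS₂abs _

lemma exp_I_mul_ofReal_neg (x : ℝ) :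
    Complex.exp (Complex.I * ((-x : ℝ) : ℂ)) = starRingEnd ℂ (Complex.exp (Complex.I * x)) := by
  rw [← Complex.exp_conj, map_mul, Complex.conj_I, Complex.conj_ofReal, Complex.ofReal_neg,
    neg_mul, mul_neg]

lemma sum_cosh_sinh_neg (m : ℝ) (a : ℝ × ℝ) {n : ℕ} (θ : Fin n → ℝ) :
    ∑ j : Fin n, m * (Real.cosh (θ j) * (-a.1) - Real.sinh (θ j) * (-a.2))
      = -∑ j : Fin n, m * (Real.cosh (θ j) * a.1 - Real.sinh (θ j) * a.2) := by
  rw [← Finset.sum_neg_distrib]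
  exact Finset.sum_congr rfl fun j _ => by ring

lemma mul_conj_mul_mul_conj {u : ℂ} (hu : ‖u‖ = 1) (e z : ℂ) :
    u * starRingEnd ℂ (e * (u * starRingEnd ℂ z)) = starRingEnd ℂ e * z := by
  have hunit : u * starRingEnd ℂ u = 1 := by rw [Complex.mul_conj', hu]; norm_num
  rw [map_mul, map_mul, Complex.conj_conj]
  linear_combination (starRingEnd ℂ e * z) * hunit

theorem statement13 (S₂ : ℝ → ℂ)
    (hS₂abs : ∀ θ : ℝ, ‖S₂ θ‖ = 1)
    (m : ℝ) (a : ℝ × ℝ) (lam : ℝ)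
    (n : ℕ)
    (J : Hsp n → Hsp n)
    (hJ : ∀ ψ : Hsp n, ∀ᵐ θ ∂(volume : Measure (Fin n → ℝ)),
      (J ψ) θ = pairProd S₂ θ * starRingEnd ℂ (ψ θ))
    -- Uₙ(a,λ)
    (U : Hsp n → Hsp n)
    (hU : ∀ ψ : Hsp n, ∀ᵐ θ ∂(volume : Measure (Fin n → ℝ)),
      (U ψ) θ
        = Complex.exp (Complex.I *
            ((∑ j : Fin n, m * (Real.cosh (θ j) * a.1 - Real.sinh (θ j) * a.2) : ℝ) : ℂ))
            * ψ (fun j => θ j - lam))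
    -- Uₙ(−a,λ)
    (U' : Hsp n → Hsp n)
    (hU' : ∀ ψ : Hsp n, ∀ᵐ θ ∂(volume : Measure (Fin n → ℝ)),
      (U' ψ) θ
        = Complex.exp (Complex.I *
            ((∑ j : Fin n, m * (Real.cosh (θ j) * (-a.1) - Real.sinh (θ j) * (-a.2)) : ℝ) : ℂ))
            * ψ (fun j => θ j - lam)) :
    ∀ ψ : Hsp n, J (U (J ψ)) = U' ψ := by
  intro ψ
  -- `hJ` holds only almost everywhere, so it is moved along the measure-preserving boost.
  have hJ_shift : ∀ᵐ θ ∂(volume : Measure (Fin n → ℝ)),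
      (J ψ) (fun j => θ j - lam)
        = pairProd S₂ (fun j => θ j - lam) * starRingEnd ℂ (ψ (fun j => θ j - lam)) :=
    (measurePreserving_sub_right volume fun _ => lam).quasiMeasurePreserving.ae (hJ ψ)
  apply Lp.ext
  filter_upwards [hJ_shift, hU (J ψ), hJ (U (J ψ)), hU' ψ] with θ hJψ hUJψ hJUJψ hU'ψ
  rw [hJUJψ, hU'ψ, hUJψ, hJψ, pairProd_sub_const, sum_cosh_sinh_neg, exp_I_mul_ofReal_neg]
  exact mul_conj_mul_mul_conj (norm_pairProd hS₂abs θ) _ _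

end
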